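/- Let μ be a σ-finite measure on 𝒳 and let q, q', r be probability densities with respect to μ, with associated probability measures Q = q·μ, Q' = q'·μ, R = r·μ. With ψ₁(x) = (x−1)/(x+1) extended by ψ₁(+∞) = 1 and the conventions 0/0 = 1 and a/0 = +∞ for a > 0, one has ∫ ψ₁²(√(q'(x)/q(x))) dR(x) ≤ 3√2·[h²(R,Q) + h²(R,Q')], where h² denotes squared Hellinger distance. -/

import Mathlib

open MeasureTheory ENNReal

open Classical in
/-- The ratio `q'/q` in `[0,+∞]`, with the conventions `0/0 = 1` and `a/0 = +∞` for
`a > 0` (the latter being automatic in `ℝ≥0∞`). -/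
noncomputable def densityRatio {𝒳 : Type*} (q q' : 𝒳 → ℝ≥0∞) (x : 𝒳) : ℝ≥0∞ :=
  if q x = 0 ∧ q' x = 0 then 1 else q' x / q x

/-- `ψ₁(√z)` for `z ∈ [0,+∞]`, where `ψ₁(x) = (x−1)/(x+1)` and `ψ₁(+∞) = 1`. -/
noncomputable def psi1OfSqrt (z : ℝ≥0∞) : ℝ :=
  if z = ⊤ then 1 else (Real.sqrt z.toReal - 1) / (Real.sqrt z.toReal + 1)

/-- Squared Hellinger distance `(1/2)∫(√a − √b)² dμ` between the probabilities of
densities `a` and `b` with respect to `μ`. -/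
noncomputable def hellingerSqDens {𝒳 : Type*} [MeasurableSpace 𝒳] (μ : Measure 𝒳)
    (a b : 𝒳 → ℝ≥0∞) : ℝ :=
  (1/2) * ∫ x, (Real.sqrt (a x).toReal - Real.sqrt (b x).toReal) ^ 2 ∂μ

/-!
Write `a = √q`, `b = √q'`, `c = √r`. Wherever `q, q'` are finite (a.e.), the conventions make
`ψ₁(√(q'/q)) = (b - a)/(a + b)` (both sides vanish when `a = b = 0`), and the elementary
inequality `((b - a)/(a + b))² c² ≤ (c - a)² + (c - b)²` integrates to
`∫ ψ₁²(√(q'/q)) dR ≤ 2 (h²(R,Q) + h²(R,Q'))`, which is stronger since `2 ≤ 3√2`.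
-/

lemma sq_sub_div_add_mul_sq_le {a b : ℝ} (ha : 0 ≤ a) (hb : 0 ≤ b) (c : ℝ) :
    ((b - a) / (a + b)) ^ 2 * c ^ 2 ≤ (c - a) ^ 2 + (c - b) ^ 2 := by
  by_cases hab : a + b = 0
  · rw [hab, _root_.div_zero, zero_pow two_ne_zero, zero_mul]
    positivity
  have hab : 0 < a + b := (add_nonneg ha hb).lt_of_ne' hab
  rw [div_pow, div_mul_eq_mul_div, div_le_iff₀ (by positivity)]
  -- `(a + b)²((c-a)² + (c-b)²) - (b-a)²c² = (a(c-a) + b(c-b))² + ab((c-a)² + (c-b)²)`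
  nlinarith [sq_nonneg (a * (c - a) + b * (c - b)),
    mul_nonneg (mul_nonneg ha hb) (sq_nonneg (c - a)),
    mul_nonneg (mul_nonneg ha hb) (sq_nonneg (c - b))]

lemma psi1OfSqrt_densityRatio {𝒳 : Type*} {q q' : 𝒳 → ℝ≥0∞} {x : 𝒳}
    (hq : q x ≠ ⊤) (hq' : q' x ≠ ⊤) :
    psi1OfSqrt (densityRatio q q' x) =
      (Real.sqrt (q' x).toReal - Real.sqrt (q x).toReal) /
        (Real.sqrt (q x).toReal + Real.sqrt (q' x).toReal) := by
  unfold densityRatio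
  split_ifs with h0
  · simp [psi1OfSqrt, h0]
  by_cases hq0 : q x = 0
  · have hq'0 : 0 < (q' x).toReal := ENNReal.toReal_pos (fun h => h0 ⟨hq0, h⟩) hq'
    rw [hq0, ENNReal.div_zero (fun h => h0 ⟨hq0, h⟩)]
    simp [psi1OfSqrt, (Real.sqrt_pos.mpr hq'0).ne']
  · have hq0' : 0 < Real.sqrt (q x).toReal := Real.sqrt_pos.mpr (ENNReal.toReal_pos hq0 hq)
    rw [psi1OfSqrt, if_neg (ENNReal.div_lt_top hq' hq0).ne, ENNReal.toReal_div,
      Real.sqrt_div ENNReal.toReal_nonneg]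
    field_simp
    ring

lemma psi1OfSqrt_densityRatio_sq_mul_le {𝒳 : Type*} {q q' : 𝒳 → ℝ≥0∞} {x : 𝒳}
    (hq : q x ≠ ⊤) (hq' : q' x ≠ ⊤) (r : 𝒳 → ℝ≥0∞) :
    psi1OfSqrt (densityRatio q q' x) ^ 2 * (r x).toReal ≤
      (Real.sqrt (r x).toReal - Real.sqrt (q x).toReal) ^ 2 +
        (Real.sqrt (r x).toReal - Real.sqrt (q' x).toReal) ^ 2 := by
  have h := sq_sub_div_add_mul_sq_le (Real.sqrt_nonneg (q x).toReal)
    (Real.sqrt_nonneg (q' x).toReal) (Real.sqrt (r x).toReal)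
  rwa [Real.sq_sqrt ENNReal.toReal_nonneg, ← psi1OfSqrt_densityRatio hq hq'] at h

lemma integrable_sq_sqrt_toReal_sub {𝒳 : Type*} [MeasurableSpace 𝒳] {μ : Measure 𝒳}
    {f g : 𝒳 → ℝ≥0∞} (hf : AEMeasurable f μ) (hg : AEMeasurable g μ)
    (hfi : ∫⁻ x, f x ∂μ ≠ ∞) (hgi : ∫⁻ x, g x ∂μ ≠ ∞) :
    Integrable (fun x => (Real.sqrt (f x).toReal - Real.sqrt (g x).toReal) ^ 2) μ := by
  refine ((integrable_toReal_of_lintegral_ne_top hf hfi).add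
    (integrable_toReal_of_lintegral_ne_top hg hgi)).mono'
    ((hf.ennreal_toReal.sqrt.sub hg.ennreal_toReal.sqrt).pow_const 2).aestronglyMeasurable
    (ae_of_all _ fun x => ?_)
  rw [Real.norm_of_nonneg (sq_nonneg _), Pi.add_apply]
  nlinarith [Real.sq_sqrt (ENNReal.toReal_nonneg (a := f x)),
    Real.sq_sqrt (ENNReal.toReal_nonneg (a := g x)),
    mul_nonneg (Real.sqrt_nonneg (f x).toReal) (Real.sqrt_nonneg (g x).toReal)]

lemma hellingerSqDens_nonneg {𝒳 : Type*} [MeasurableSpace 𝒳] (μ : Measure 𝒳)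
    (a b : 𝒳 → ℝ≥0∞) : 0 ≤ hellingerSqDens μ a b := by
  unfold hellingerSqDens
  positivity

theorem integral_psi1OfSqrt_densityRatio_sq_le {𝒳 : Type*} [MeasurableSpace 𝒳]
    {μ : Measure 𝒳} {q q' r : 𝒳 → ℝ≥0∞}
    (hq : AEMeasurable q μ) (hq' : AEMeasurable q' μ) (hr : AEMeasurable r μ)
    (hqi : ∫⁻ x, q x ∂μ ≠ ∞) (hq'i : ∫⁻ x, q' x ∂μ ≠ ∞) (hri : ∫⁻ x, r x ∂μ ≠ ∞) :
    ∫ x, psi1OfSqrt (densityRatio q q' x) ^ 2 ∂(μ.withDensity r) ≤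
      2 * (hellingerSqDens μ r q + hellingerSqDens μ r q') := by
  rw [integral_withDensity_eq_integral_toReal_smul₀ hr (ae_lt_top' hr hri)]
  calc ∫ x, (r x).toReal • psi1OfSqrt (densityRatio q q' x) ^ 2 ∂μ
      ≤ ∫ x, ((Real.sqrt (r x).toReal - Real.sqrt (q x).toReal) ^ 2 +
          (Real.sqrt (r x).toReal - Real.sqrt (q' x).toReal) ^ 2) ∂μ := by
        refine integral_mono_of_nonneg (ae_of_all _ fun x => by positivity)
          ((integrable_sq_sqrt_toReal_sub hr hq hri hqi).add
            (integrable_sq_sqrt_toReal_sub hr hq' hri hq'i)) ?_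
        filter_upwards [ae_lt_top' hq hqi, ae_lt_top' hq' hq'i] with x hxq hxq'
        rw [smul_eq_mul, mul_comm]
        exact psi1OfSqrt_densityRatio_sq_mul_le hxq.ne hxq'.ne r
    _ = 2 * (hellingerSqDens μ r q + hellingerSqDens μ r q') := by
        rw [integral_add (integrable_sq_sqrt_toReal_sub hr hq hri hqi)
          (integrable_sq_sqrt_toReal_sub hr hq' hri hq'i), hellingerSqDens, hellingerSqDens]
        ring

theorem psi1_sq_expectation_le_hellinger_sum_general
    {𝒳 : Type*} [MeasurableSpace 𝒳] (μ : Measure 𝒳)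
    (q q' r : 𝒳 → ℝ≥0∞) (hq : Measurable q) (hq' : Measurable q') (hr : Measurable r)
    (hq1 : ∫⁻ x, q x ∂μ = 1) (hq'1 : ∫⁻ x, q' x ∂μ = 1) (hr1 : ∫⁻ x, r x ∂μ = 1) :
    ∫ x, (psi1OfSqrt (densityRatio q q' x)) ^ 2 ∂(μ.withDensity r) ≤
      3 * Real.sqrt 2 * (hellingerSqDens μ r q + hellingerSqDens μ r q') := by
  have hbound := integral_psi1OfSqrt_densityRatio_sq_le hq.aemeasurable hq'.aemeasurable
    hr.aemeasurable (hq1.trans_ne one_ne_top)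
    (hq'1.trans_ne one_ne_top) (hr1.trans_ne one_ne_top)
  have hsum := add_nonneg (hellingerSqDens_nonneg μ r q) (hellingerSqDens_nonneg μ r q')
  have hconst : (2 : ℝ) ≤ 3 * Real.sqrt 2 := by
    nlinarith [Real.one_lt_sqrt_two]
  exact hbound.trans (mul_le_mul_of_nonneg_right hconst hsum)

/-- For probability densities `q, q', r` w.r.t. a σ-finite measure `μ`, with
`R = r·μ`, `Q = q·μ`, `Q' = q'·μ`, one has
`∫ ψ₁²(√(q'/q)) dR ≤ 3√2·[h²(R,Q) + h²(R,Q')]`. -/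
theorem psi1_sq_expectation_le_hellinger_sum
    {𝒳 : Type*} [MeasurableSpace 𝒳] (μ : Measure 𝒳) [SigmaFinite μ]
    (q q' r : 𝒳 → ℝ≥0∞) (hq : Measurable q) (hq' : Measurable q') (hr : Measurable r)
    (hq1 : ∫⁻ x, q x ∂μ = 1) (hq'1 : ∫⁻ x, q' x ∂μ = 1) (hr1 : ∫⁻ x, r x ∂μ = 1) :
    ∫ x, (psi1OfSqrt (densityRatio q q' x)) ^ 2 ∂(μ.withDensity r) ≤
      3 * Real.sqrt 2 * (hellingerSqDens μ r q + hellingerSqDens μ r q') :=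
  psi1_sq_expectation_le_hellinger_sum_general μ q q' r hq hq' hr hq1 hq'1 hr1
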